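/- arXiv:2405.13853 — 2 statements merged into one kernel-verified Lean document; each statement's English description precedes it below -/
import Mathlib

section
/- Let F be a field and define φ(y,z) = (z/y, (1-z)/(1-y)) for y,z ∈ F with y ≠ 0 and y ≠ 1. Suppose y,z ∈ F satisfy y ∉ {0,1}, z ∉ {0,1}, and y ≠ z. Then φ(y,z) again satisfies these three conditions (both coordinates lie outside {0,1} and they are distinct), and the five-fold composite satisfies φ⁵(y,z) = (y,z). -/
/-! The pair `(y, z)` stands for the five points `∞, 0, 1, y, z` of the projective line, normalized
by an affine map so that the first three are `∞, 0, 1`; `φ` permutes the five points cyclically and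
renormalizes. This is why `φ` preserves distinctness of the five points and has order five. In
coordinates: `φ² (y, z) = (y(1-z)/(z(1-y)), y/(y-1))` and `φ³ (y, z) = (z/(z-1), z/(z-y))`, and
substituting the former into the latter gives back `(y, z)`. -/

/-- The map `φ(y,z) = (z/y, (1-z)/(1-y))`. -/
def phiRad {F : Type*} [Field F] (p : F × F) : F × F :=
  (p.2 / p.1, (1 - p.2) / (1 - p.1))

section

variable {F : Type*} [Field F]

/-- The five points `∞, 0, 1, y, z` are distinct. -/
def IsGenericPair (p : F × F) : Prop :=
  p.1 ≠ 0 ∧ p.1 ≠ 1 ∧ p.2 ≠ 0 ∧ p.2 ≠ 1 ∧ p.1 ≠ p.2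

theorem isGenericPair_phiRad {p : F × F} (hp : IsGenericPair p) : IsGenericPair (phiRad p) := by
  obtain ⟨y, z⟩ := p
  obtain ⟨hy0, hy1, hz0, hz1, hyz⟩ : y ≠ 0 ∧ y ≠ 1 ∧ z ≠ 0 ∧ z ≠ 1 ∧ y ≠ z := hp
  have hy1' : (1 : F) - y ≠ 0 := sub_ne_zero.mpr hy1.symm
  have hz1' : (1 : F) - z ≠ 0 := sub_ne_zero.mpr hz1.symm
  refine ⟨div_ne_zero hz0 hy0, fun h => hyz ((div_eq_one_iff_eq hy0).mp h).symm,
    div_ne_zero hz1' hy1', fun h => hyz ?_, fun h => hyz ?_⟩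
  · linear_combination (div_eq_one_iff_eq hy1').mp h
  · linear_combination -(div_eq_div_iff hy0 hy1').mp h

theorem isGenericPair_phiRad_iterate {p : F × F} (hp : IsGenericPair p) (n : ℕ) :
    IsGenericPair (phiRad^[n] p) := by
  induction n with
  | zero => exact hp
  | succ n ih => simpa only [Function.iterate_succ_apply'] using isGenericPair_phiRad ih

theorem phiRad_iterate_two {y z : F} (hy0 : y ≠ 0) (hy1 : y ≠ 1) (hyz : y ≠ z) :
    phiRad^[2] (y, z) = (y * (1 - z) / (z * (1 - y)), y / (y - 1)) := by
  have hy1' : y - 1 ≠ 0 := sub_ne_zero.mpr hy1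
  simp only [Function.iterate_succ_apply', Function.iterate_zero_apply, phiRad, Prod.mk.injEq]
  exact ⟨by field_simp, by field_simp; ring⟩

theorem phiRad_iterate_three {y z : F} (hy0 : y ≠ 0) (hy1 : y ≠ 1) (hz0 : z ≠ 0) (hz1 : z ≠ 1)
    (hyz : y ≠ z) : phiRad^[3] (y, z) = (z / (z - 1), z / (z - y)) := by
  have hy1' : 1 - y ≠ 0 := sub_ne_zero.mpr hy1.symm
  have hb : 1 - y / (y - 1) = -1 / (y - 1) := by field_simp; ring
  have ha : 1 - y * (1 - z) / (z * (1 - y)) = (z - y) / (z * (1 - y)) := by field_simp; ring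
  rw [Function.iterate_succ_apply', phiRad_iterate_two hy0 hy1 hyz]
  simp only [phiRad, hb, ha, Prod.mk.injEq]
  constructor <;> field_simp <;> ring

theorem phiRad_iterate_five {p : F × F} (hp : IsGenericPair p) : phiRad^[5] p = p := by
  obtain ⟨y, z⟩ := p
  have h2 := isGenericPair_phiRad_iterate hp 2
  obtain ⟨hy0, hy1, hz0, -, hyz⟩ : y ≠ 0 ∧ y ≠ 1 ∧ z ≠ 0 ∧ z ≠ 1 ∧ y ≠ z := hp
  rw [phiRad_iterate_two hy0 hy1 hyz] at h2
  obtain ⟨ha0, ha1, hb0, hb1, hab⟩ := h2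
  rw [Function.iterate_add_apply phiRad 3 2, phiRad_iterate_two hy0 hy1 hyz,
    phiRad_iterate_three ha0 ha1 hb0 hb1 hab]
  have hy1' : 1 - y ≠ 0 := sub_ne_zero.mpr hy1.symm
  have hb : y / (y - 1) - 1 = -1 / (1 - y) := by field_simp; ring
  have hba : y / (y - 1) - y * (1 - z) / (z * (1 - y)) = -y / (z * (1 - y)) := by
    field_simp; ring
  rw [hb, hba, Prod.mk.injEq]
  constructor <;> field_simp <;> ring

end

/-- If `y, z ∉ {0,1}` and `y ≠ z`, then `φ(y,z) = (z/y, (1-z)/(1-y))` again satisfies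
these three conditions, and `φ` has order five: `φ⁵(y,z) = (y,z)`. -/
theorem phiRad_conditions_and_order_five {F : Type*} [Field F] (y z : F)
    (hy0 : y ≠ 0) (hy1 : y ≠ 1) (hz0 : z ≠ 0) (hz1 : z ≠ 1) (hyz : y ≠ z) :
    ((phiRad (y, z)).1 ≠ 0 ∧ (phiRad (y, z)).1 ≠ 1 ∧
      (phiRad (y, z)).2 ≠ 0 ∧ (phiRad (y, z)).2 ≠ 1 ∧
      (phiRad (y, z)).1 ≠ (phiRad (y, z)).2) ∧
    phiRad^[5] (y, z) = (y, z) := by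
  have h : IsGenericPair (y, z) := ⟨hy0, hy1, hz0, hz1, hyz⟩
  exact ⟨isGenericPair_phiRad h, phiRad_iterate_five h⟩
end

section
/- Let Σ be a linearly ordered alphabet and let w be a Lyndon word over Σ (i.e. a nonempty word lexicographically strictly smaller than all its proper nonempty suffixes) of length at least 2. Let a be the first letter of w and let r ≥ 1 be the length of the initial run of a's in w (so w = aʳ·w' where w' is nonempty and does not start with a). Then the word a^{r+1} (r+1 consecutive copies of a) does not occur as a contiguous factor (infix) of w. -/
/-! Write `w = aʳ b u` with `b ≠ a`. Comparing `w` with its suffix `b u` gives `a < b`.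
An occurrence of `a^{r+1}` cannot start at position `0`, since `b ≠ a`; at a positive
position the suffix of `w` starting there begins with `aʳ a`, and comparing it with
`w = aʳ b u` forces `b ≤ a`. -/

theorem List.lex_append_left_iff {α : Type*} {r : α → α → Prop} [Std.Irrefl r]
    {t₁ t₂ : List α} (s : List α) : List.Lex r (s ++ t₁) (s ++ t₂) ↔ List.Lex r t₁ t₂ := by
  induction s with
  | nil => rfl
  | cons x s ih => exact List.lex_cons_iff.trans ih

theorem lyndon_initial_run_longest_general {α : Type*} [LinearOrder α] (w : List α) (a : α)
    (r : ℕ) (w' : List α)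
    (hlyndon : ∀ i, 0 < i → i < w.length → List.Lex (· < ·) w (w.drop i))
    (hr : 1 ≤ r) (hdecomp : w = List.replicate r a ++ w') (hw' : w' ≠ [])
    (hstart : ∀ h : w' ≠ [], w'.head h ≠ a) :
    ¬ List.replicate (r + 1) a <:+: w := by
  rintro ⟨s, t, hst⟩
  obtain ⟨b, u, rfl⟩ := List.exists_cons_of_ne_nil hw'
  have hba : b ≠ a := hstart hw'
  have hrun : List.replicate (r + 1) a = List.replicate r a ++ [a] := List.replicate_succ'
  have hab : a < b := by
    have hsuffix := hlyndon r hr (by simp [hdecomp])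
    rw [hdecomp, List.drop_left' List.length_replicate] at hsuffix
    obtain ⟨k, rfl⟩ : ∃ k, r = k + 1 := ⟨r - 1, by omega⟩
    exact (List.head_le_of_lt hsuffix).lt_of_ne hba.symm
  cases s with
  | nil =>
    rw [List.nil_append, hrun, hdecomp, List.append_assoc, List.append_cancel_left_eq] at hst
    exact hba (List.cons_eq_cons.mp hst).1.symm
  | cons x s =>
    have hdrop : w.drop (x :: s).length = List.replicate r a ++ a :: t := by
      rw [← hst, List.append_assoc, List.drop_left, hrun, List.append_assoc]
      rfl
    have hocc := hlyndon (x :: s).length (by simp)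
      (by simp only [← hst, List.length_append, List.length_replicate]; omega)
    rw [hdrop, hdecomp, List.lex_append_left_iff] at hocc
    exact (List.head_le_of_lt hocc).not_gt hab

/-- In a Lyndon word `w = aʳ · w'` (with `a` the first letter, `r ≥ 1` the length of the
initial run of `a`'s, and `w'` nonempty not starting with `a`), the word `a^{r+1}` does
not occur as a contiguous factor (infix) of `w`. -/
theorem lyndon_initial_run_longest {α : Type*} [LinearOrder α] (w : List α) (a : α)
    (r : ℕ) (w' : List α) (hne : w ≠ [])
    (hlyndon : ∀ i, 0 < i → i < w.length → List.Lex (· < ·) w (w.drop i))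
    (hlen : 2 ≤ w.length)
    (hr : 1 ≤ r) (hdecomp : w = List.replicate r a ++ w') (hw' : w' ≠ [])
    (hstart : ∀ h : w' ≠ [], w'.head h ≠ a) :
    ¬ List.replicate (r + 1) a <:+: w :=
  lyndon_initial_run_longest_general w a r w' hlyndon hr hdecomp hw' hstart
end
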